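/- arXiv:2202.06317 — 2 statements merged into one kernel-verified Lean document; each statement's English description precedes it below -/
import Mathlib

section
/- Suppose the logging policy has universal support (π₀(a|x) > 0 for all x,a) and the No Direct Effect assumption holds for the first two reward moments: q(x,a,e) = q̄(x,e) and m₂(x,a,e) = m̄₂(x,e) for all a, with m̄₂(x,e) ≥ 0. Define for a weight function ω : X × A × E → ℝ the single-sample variance Var[ω] := E₀[ω² · m₂] − (E₀[ω · q])². Then Var[w_A] − Var[w_E] = ∑_{x∈X} p(x) ∑_{e∈E} p(e|x,π₀) · m̄₂(x,e) · ( ∑_{a} π₀(a|x,e)·w(x,a)² − ( ∑_{a} π₀(a|x,e)·w(x,a) )² ), where w_A(x,a,e) := w(x,a) and w_E(x,a,e) := w(x,e); moreover this quantity is nonnegative. (Here Var[w_A] is n times the variance of the n-sample IPS estimator and Var[w_E] is n times the variance of the n-sample MIPS estimator.) -/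
open Finset

/-- Marginal embedding distribution `p(e|x,π')` of a policy `π'`. -/
noncomputable def pE {X A E : Type*} [Fintype A]
    (π' : X → A → ℝ) (φ : X → A → E → ℝ) (x : X) (e : E) : ℝ :=
  ∑ a, π' x a * φ x a e

/-- Marginal importance weight `w(x,e) = p(e|x,π)/p(e|x,π₀)` (with `c/0 = 0`). -/
noncomputable def wE {X A E : Type*} [Fintype A]
    (πt π₀ : X → A → ℝ) (φ : X → A → E → ℝ) (x : X) (e : E) : ℝ :=
  pE πt φ x e / pE π₀ φ x e

/-- Vanilla importance weight `w(x,a) = π(a|x)/π₀(a|x)`. -/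
noncomputable def wA {X A : Type*} (πt π₀ : X → A → ℝ) (x : X) (a : A) : ℝ :=
  πt x a / π₀ x a

/-- Conditional action distribution `π₀(a|x,e)` (with `c/0 = 0`). -/
noncomputable def condπ₀ {X A E : Type*} [Fintype A]
    (π₀ : X → A → ℝ) (φ : X → A → E → ℝ) (x : X) (a : A) (e : E) : ℝ :=
  π₀ x a * φ x a e / pE π₀ φ x e

/-- Expectation under the logging process. -/
noncomputable def E₀ {X A E : Type*} [Fintype X] [Fintype A] [Fintype E]
    (p : X → ℝ) (π₀ : X → A → ℝ) (φ : X → A → E → ℝ) (f : X → A → E → ℝ) : ℝ :=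
  ∑ x, ∑ a, ∑ e, p x * π₀ x a * φ x a e * f x a e

/-- Single-sample variance of the weighted estimator with weight `ω`:
`Var[ω] = E₀[ω²·m₂] − (E₀[ω·q])²`. -/
noncomputable def Var₀ {X A E : Type*} [Fintype X] [Fintype A] [Fintype E]
    (p : X → ℝ) (π₀ : X → A → ℝ) (φ : X → A → E → ℝ)
    (q m₂ : X → A → E → ℝ) (ω : X → A → E → ℝ) : ℝ :=
  E₀ p π₀ φ (fun x a e => ω x a e ^ 2 * m₂ x a e) -
    (E₀ p π₀ φ (fun x a e => ω x a e * q x a e)) ^ 2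

section helpers
variable {X A E : Type*} [Fintype A]
variable {πt π₀ : X → A → ℝ} {φ : X → A → E → ℝ}

lemma pE_nonneg (hπ₀ : ∀ x a, 0 < π₀ x a) (hφ : ∀ x a e, 0 ≤ φ x a e) (x : X) (e : E) :
    0 ≤ pE π₀ φ x e :=
  Finset.sum_nonneg fun a _ => mul_nonneg (hπ₀ x a).le (hφ x a e)

lemma phi_eq_zero (hπ₀ : ∀ x a, 0 < π₀ x a) (hφ : ∀ x a e, 0 ≤ φ x a e)
    {x : X} {e : E} (h : pE π₀ φ x e = 0) (a : A) : φ x a e = 0 := by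
  have h2 := (Finset.sum_eq_zero_iff_of_nonneg
    (fun a _ => mul_nonneg (hπ₀ x a).le (hφ x a e))).mp h a (mem_univ a)
  rcases mul_eq_zero.mp h2 with h1 | h1
  · exact absurd h1 (hπ₀ x a).ne'
  · exact h1

lemma F1 (hπ₀ : ∀ x a, 0 < π₀ x a) (x : X) (e : E) :
    ∑ a, π₀ x a * φ x a e * wA πt π₀ x a = pE πt φ x e := by
  refine Finset.sum_congr rfl fun a _ => ?_
  unfold wA
  field_simp [(hπ₀ x a).ne']

lemma pEt_eq_zero (hπ₀ : ∀ x a, 0 < π₀ x a) (hφ : ∀ x a e, 0 ≤ φ x a e)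
    {x : X} {e : E} (h : pE π₀ φ x e = 0) : pE πt φ x e = 0 :=
  Finset.sum_eq_zero fun a _ => by rw [phi_eq_zero hπ₀ hφ h a, mul_zero]

lemma F2 (hπ₀ : ∀ x a, 0 < π₀ x a) (hφ : ∀ x a e, 0 ≤ φ x a e) (x : X) (e : E) :
    pE π₀ φ x e * wE πt π₀ φ x e = pE πt φ x e := by
  by_cases h : pE π₀ φ x e = 0
  · rw [h, zero_mul, pEt_eq_zero hπ₀ hφ h]
  · unfold wE; field_simp

lemma F3 (hπ₀ : ∀ x a, 0 < π₀ x a) (hφ : ∀ x a e, 0 ≤ φ x a e) (x : X) (e : E) (g : A → ℝ) :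
    pE π₀ φ x e * ∑ a, condπ₀ π₀ φ x a e * g a = ∑ a, π₀ x a * φ x a e * g a := by
  by_cases h : pE π₀ φ x e = 0
  · rw [h, zero_mul]
    exact (Finset.sum_eq_zero fun a _ => by
      rw [phi_eq_zero hπ₀ hφ h a, mul_zero, zero_mul]).symm
  · rw [Finset.mul_sum]
    refine Finset.sum_congr rfl fun a _ => ?_
    unfold condπ₀
    field_simp

lemma F4 (hπ₀ : ∀ x a, 0 < π₀ x a) (hφ : ∀ x a e, 0 ≤ φ x a e) (x : X) (e : E) :
    ∑ a, condπ₀ π₀ φ x a e * wA πt π₀ x a = wE πt π₀ φ x e := by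
  by_cases h : pE π₀ φ x e = 0
  · rw [Finset.sum_eq_zero fun a _ => by unfold condπ₀; rw [h, div_zero, zero_mul]]
    unfold wE; rw [h, div_zero]
  · have := F3 hπ₀ hφ x e (wA πt π₀ x)
    rw [F1 hπ₀, ← F2 (πt := πt) hπ₀ hφ x e] at this
    exact mul_left_cancel₀ h this

lemma cond_sum_one (hπ₀ : ∀ x a, 0 < π₀ x a) (hφ : ∀ x a e, 0 ≤ φ x a e)
    {x : X} {e : E} (h : pE π₀ φ x e ≠ 0) : ∑ a, condπ₀ π₀ φ x a e = 1 := by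
  have h1 := F3 hπ₀ hφ x e (fun _ => 1)
  simp only [mul_one] at h1
  have h2 : pE π₀ φ x e * ∑ a, condπ₀ π₀ φ x a e = pE π₀ φ x e * 1 := by
    rw [mul_one, h1]; rfl
  exact mul_left_cancel₀ h h2

end helpers

/-- Theorem 2 (variance reduction of MIPS): under universal support and
No Direct Effect for the first two reward moments, the difference between
the single-sample variances of IPS and MIPS equals the stated nonnegative
quantity. -/
theorem mips_variance_reduction
    {X A E : Type*} [Fintype X] [Fintype A] [Fintype E]
    (p : X → ℝ) (πt π₀ : X → A → ℝ) (φ : X → A → E → ℝ)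
    (q m₂ : X → A → E → ℝ) (qbar m2bar : X → E → ℝ)
    (hp : ∀ x, 0 ≤ p x) (hp1 : ∑ x, p x = 1)
    (hπt : ∀ x a, 0 ≤ πt x a) (hπt1 : ∀ x, ∑ a, πt x a = 1)
    (hπ₀pos : ∀ x a, 0 < π₀ x a) (hπ₀1 : ∀ x, ∑ a, π₀ x a = 1)
    (hφ : ∀ x a e, 0 ≤ φ x a e) (hφ1 : ∀ x a, ∑ e, φ x a e = 1)
    (hq : ∀ x a e, q x a e = qbar x e)
    (hm : ∀ x a e, m₂ x a e = m2bar x e)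
    (hm0 : ∀ x e, 0 ≤ m2bar x e) :
    Var₀ p π₀ φ q m₂ (fun x a _ => wA πt π₀ x a) -
        Var₀ p π₀ φ q m₂ (fun x _ e => wE πt π₀ φ x e) =
      (∑ x, p x * ∑ e, pE π₀ φ x e * m2bar x e *
        ((∑ a, condπ₀ π₀ φ x a e * wA πt π₀ x a ^ 2) -
          (∑ a, condπ₀ π₀ φ x a e * wA πt π₀ x a) ^ 2)) ∧
    0 ≤ ∑ x, p x * ∑ e, pE π₀ φ x e * m2bar x e *
        ((∑ a, condπ₀ π₀ φ x a e * wA πt π₀ x a ^ 2) -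
          (∑ a, condπ₀ π₀ φ x a e * wA πt π₀ x a) ^ 2) := by
  have hkey : ∀ x e, (∑ a, p x * π₀ x a * φ x a e * (wA πt π₀ x a ^ 2 * m2bar x e))
      - ∑ a, p x * π₀ x a * φ x a e * (wE πt π₀ φ x e ^ 2 * m2bar x e)
      = p x * (pE π₀ φ x e * m2bar x e *
        ((∑ a, condπ₀ π₀ φ x a e * wA πt π₀ x a ^ 2) -
          (∑ a, condπ₀ π₀ φ x a e * wA πt π₀ x a) ^ 2)) := by
    intro x e
    have e1 : ∑ a, p x * π₀ x a * φ x a e * (wA πt π₀ x a ^ 2 * m2bar x e)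
        = p x * m2bar x e * (pE π₀ φ x e * ∑ a, condπ₀ π₀ φ x a e * wA πt π₀ x a ^ 2) := by
      rw [F3 hπ₀pos hφ x e (fun a => wA πt π₀ x a ^ 2), Finset.mul_sum]
      exact Finset.sum_congr rfl fun a _ => by ring
    have e2 : ∑ a, p x * π₀ x a * φ x a e * (wE πt π₀ φ x e ^ 2 * m2bar x e)
        = p x * m2bar x e * (pE π₀ φ x e * (∑ a, condπ₀ π₀ φ x a e * wA πt π₀ x a) ^ 2) := by
      rw [F4 hπ₀pos hφ x e]
      have hpe : (∑ a, π₀ x a * φ x a e) = pE π₀ φ x e := rfl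
      calc ∑ a, p x * π₀ x a * φ x a e * (wE πt π₀ φ x e ^ 2 * m2bar x e)
          = (p x * (wE πt π₀ φ x e ^ 2 * m2bar x e)) * ∑ a, π₀ x a * φ x a e := by
            rw [Finset.mul_sum]; exact Finset.sum_congr rfl fun a _ => by ring
        _ = p x * m2bar x e * (pE π₀ φ x e * wE πt π₀ φ x e ^ 2) := by rw [hpe]; ring
    rw [e1, e2]; ring
  have hcrossx : ∀ x e, (∑ a, p x * π₀ x a * φ x a e * (wA πt π₀ x a * qbar x e))
      = ∑ a, p x * π₀ x a * φ x a e * (wE πt π₀ φ x e * qbar x e) := by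
    intro x e
    have l : (∑ a, p x * π₀ x a * φ x a e * (wA πt π₀ x a * qbar x e))
        = p x * qbar x e * ∑ a, π₀ x a * φ x a e * wA πt π₀ x a := by
      rw [Finset.mul_sum]; exact Finset.sum_congr rfl fun a _ => by ring
    have r : (∑ a, p x * π₀ x a * φ x a e * (wE πt π₀ φ x e * qbar x e))
        = p x * qbar x e * (pE π₀ φ x e * wE πt π₀ φ x e) := by
      have hpe : (∑ a, π₀ x a * φ x a e) = pE π₀ φ x e := rfl
      calc (∑ a, p x * π₀ x a * φ x a e * (wE πt π₀ φ x e * qbar x e))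
          = (p x * qbar x e * wE πt π₀ φ x e) * ∑ a, π₀ x a * φ x a e := by
            rw [Finset.mul_sum]; exact Finset.sum_congr rfl fun a _ => by ring
        _ = p x * qbar x e * (pE π₀ φ x e * wE πt π₀ φ x e) := by rw [hpe]; ring
    rw [l, r, F2 hπ₀pos hφ x e, F1 hπ₀pos x e]
  constructor
  · unfold Var₀ E₀
    simp only [hq, hm]
    have c1 : (∑ x, ∑ a, ∑ e, p x * π₀ x a * φ x a e * (wA πt π₀ x a * qbar x e))
        = ∑ x, ∑ a, ∑ e, p x * π₀ x a * φ x a e * (wE πt π₀ φ x e * qbar x e) := by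
      refine Finset.sum_congr rfl fun x _ => ?_
      rw [Finset.sum_comm]
      conv_rhs => rw [Finset.sum_comm]
      exact Finset.sum_congr rfl fun e _ => hcrossx x e
    rw [c1, sub_sub_sub_cancel_right, ← Finset.sum_sub_distrib]
    refine Finset.sum_congr rfl fun x _ => ?_
    rw [Finset.mul_sum]
    simp only [← Finset.sum_sub_distrib]
    rw [Finset.sum_comm]
    refine Finset.sum_congr rfl fun e _ => ?_
    rw [Finset.sum_sub_distrib]
    exact hkey x e
  · refine Finset.sum_nonneg fun x _ => mul_nonneg (hp x) (Finset.sum_nonneg fun e _ => ?_)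
    by_cases h : pE π₀ φ x e = 0
    · rw [h, zero_mul, zero_mul]
    · have hP : 0 < pE π₀ φ x e := lt_of_le_of_ne (pE_nonneg hπ₀pos hφ x e) (Ne.symm h)
      refine mul_nonneg (mul_nonneg hP.le (hm0 x e)) ?_
      rw [sub_nonneg]
      have hc : ∀ a, 0 ≤ condπ₀ π₀ φ x a e := fun a =>
        div_nonneg (mul_nonneg (hπ₀pos x a).le (hφ x a e)) hP.le
      calc (∑ a, condπ₀ π₀ φ x a e * wA πt π₀ x a) ^ 2
          = (∑ a, Real.sqrt (condπ₀ π₀ φ x a e) *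
              (Real.sqrt (condπ₀ π₀ φ x a e) * wA πt π₀ x a)) ^ 2 := by
            congr 1
            exact Finset.sum_congr rfl fun a _ => by
              rw [← mul_assoc, Real.mul_self_sqrt (hc a)]
        _ ≤ (∑ a, Real.sqrt (condπ₀ π₀ φ x a e) ^ 2) *
            ∑ a, (Real.sqrt (condπ₀ π₀ φ x a e) * wA πt π₀ x a) ^ 2 :=
            Finset.sum_mul_sq_le_sq_mul_sq _ _ _
        _ = ∑ a, condπ₀ π₀ φ x a e * wA πt π₀ x a ^ 2 := by
            have s1 : (∑ a, Real.sqrt (condπ₀ π₀ φ x a e) ^ 2) = 1 := by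
              rw [Finset.sum_congr rfl fun a _ => Real.sq_sqrt (hc a)]
              exact cond_sum_one hπ₀pos hφ h
            rw [s1, one_mul]
            exact Finset.sum_congr rfl fun a _ => by
              rw [mul_pow, Real.sq_sqrt (hc a)]
end

section
/- Suppose full embedding support holds (p(e|x,π) > 0 and p(e|x,π₀) > 0 for all x,e) and the No Direct Effect assumption holds for the first two reward moments: q(x,a,e) = q̄(x,e) and m₂(x,a,e) = m̄₂(x,e) for all a. Let ŵ : X × E → ℝ be any estimated marginal importance weight, δ(x,e) := 1 − ŵ(x,e)/w(x,e), and σ̄²(x,e) := m̄₂(x,e) − q̄(x,e)². Then the single-sample variance of the estimator with weight ŵ satisfies: E₀[ŵ(x,e)²·m̄₂(x,e)] − (E₀[ŵ(x,e)·q̄(x,e)])² = ∑_{x} p(x) ∑_{e} p(e|x,π)·(1−δ(x,e))²·w(x,e)·σ̄²(x,e) + ∑_{x} p(x)·[ ∑_{e} p(e|x,π₀)·ŵ(x,e)²·q̄(x,e)² − ( ∑_{e} p(e|x,π₀)·ŵ(x,e)·q̄(x,e) )² ] + [ ∑_{x} p(x)·( ∑_{e} p(e|x,π)·(1−δ(x,e))·q̄(x,e)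 )² − ( ∑_{x} p(x) ∑_{e} p(e|x,π)·(1−δ(x,e))·q̄(x,e) )² ]. -/
/-! The variance is a law-of-total-variance split: the reward noise `σ̄²`, the spread of
`ŵ q̄` over embeddings given `x`, and the spread over contexts of its conditional mean.
Because `1 - δ = ŵ / w`, every `p(e|x,π)`-weighted sum on the right is a `p(e|x,π₀)`-weighted
sum of `ŵ`-terms, after which the three pieces telescope. -/

open Finset

theorem E₀_eq_sum_pE {X A E : Type*} [Fintype X] [Fintype A] [Fintype E]
    (p : X → ℝ) (π₀ : X → A → ℝ) (φ : X → A → E → ℝ) (g : X → E → ℝ) :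
    E₀ p π₀ φ (fun x _ e => g x e) = ∑ x, p x * ∑ e, pE π₀ φ x e * g x e := by
  unfold E₀ pE
  refine sum_congr rfl fun x _ => ?_
  simp only [mul_sum, sum_mul]
  rw [sum_comm]
  exact sum_congr rfl fun _ _ => sum_congr rfl fun _ _ => by ring

section ImportanceWeight

variable {X A E : Type*} [Fintype A] {πt π₀ : X → A → ℝ} {φ : X → A → E → ℝ} {x : X} {e : E}

theorem pE_mul_div_wE (h : pE πt φ x e ≠ 0) (c : ℝ) :
    pE πt φ x e * (c / wE πt π₀ φ x e) = pE π₀ φ x e * c := by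
  rw [wE, div_div_eq_mul_div, mul_div_cancel₀ _ h, mul_comm]

theorem pE_mul_div_wE_sq_mul_wE (h : pE πt φ x e ≠ 0) (c : ℝ) :
    pE πt φ x e * (c / wE πt π₀ φ x e) ^ 2 * wE πt π₀ φ x e = pE π₀ φ x e * c ^ 2 := by
  rw [wE, div_div_eq_mul_div]
  -- when `p(e|x,π₀) = 0`, also `w = 0` (as `b / 0 = 0`) and both sides vanish
  by_cases h₀ : pE π₀ φ x e = 0
  · simp [h₀]
  · field_simp

end ImportanceWeight

theorem mips_variance_estimated_weights_general
    {X A E : Type*} [Fintype X] [Fintype A] [Fintype E]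
    (p : X → ℝ) (πt π₀ : X → A → ℝ) (φ : X → A → E → ℝ)
    (qbar m2bar : X → E → ℝ)
    (wHat : X → E → ℝ) (δ : X → E → ℝ) (σ2bar : X → E → ℝ)
    (hsuppt : ∀ x e, 0 < pE πt φ x e)
    (hδ : ∀ x e, δ x e = 1 - wHat x e / wE πt π₀ φ x e)
    (hσ : ∀ x e, σ2bar x e = m2bar x e - qbar x e ^ 2) :
    E₀ p π₀ φ (fun x _ e => wHat x e ^ 2 * m2bar x e) -
        (E₀ p π₀ φ (fun x _ e => wHat x e * qbar x e)) ^ 2 =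
      (∑ x, p x * ∑ e, pE πt φ x e * (1 - δ x e) ^ 2 * wE πt π₀ φ x e * σ2bar x e) +
        (∑ x, p x * ((∑ e, pE π₀ φ x e * wHat x e ^ 2 * qbar x e ^ 2) -
          (∑ e, pE π₀ φ x e * wHat x e * qbar x e) ^ 2)) +
        ((∑ x, p x * (∑ e, pE πt φ x e * (1 - δ x e) * qbar x e) ^ 2) -
          (∑ x, p x * ∑ e, pE πt φ x e * (1 - δ x e) * qbar x e) ^ 2) := by
  have hne : ∀ x e, pE πt φ x e ≠ 0 := fun x e => (hsuppt x e).ne'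
  have hw : ∀ x e, 1 - δ x e = wHat x e / wE πt π₀ φ x e := fun x e => by
    rw [hδ, sub_sub_cancel]
  simp only [E₀_eq_sum_pE, hw, hσ, pE_mul_div_wE (hne _ _), pE_mul_div_wE_sq_mul_wE (hne _ _)]
  simp only [mul_sub, sum_sub_distrib, mul_assoc]
  ring

/-- Variance of MIPS with estimated marginal importance weights `ŵ`:
under full embedding support and No Direct Effect for the first two reward
moments, the single-sample variance decomposes into three terms. -/
theorem mips_variance_estimated_weights
    {X A E : Type*} [Fintype X] [Fintype A] [Fintype E]
    (p : X → ℝ) (πt π₀ : X → A → ℝ) (φ : X → A → E → ℝ)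
    (q m₂ : X → A → E → ℝ) (qbar m2bar : X → E → ℝ)
    (wHat : X → E → ℝ) (δ : X → E → ℝ) (σ2bar : X → E → ℝ)
    (hp : ∀ x, 0 ≤ p x) (hp1 : ∑ x, p x = 1)
    (hπt : ∀ x a, 0 ≤ πt x a) (hπt1 : ∀ x, ∑ a, πt x a = 1)
    (hπ₀ : ∀ x a, 0 ≤ π₀ x a) (hπ₀1 : ∀ x, ∑ a, π₀ x a = 1)
    (hφ : ∀ x a e, 0 ≤ φ x a e) (hφ1 : ∀ x a, ∑ e, φ x a e = 1)
    (hsuppt : ∀ x e, 0 < pE πt φ x e) (hsupp₀ : ∀ x e, 0 < pE π₀ φ x e)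
    (hq : ∀ x a e, q x a e = qbar x e)
    (hm : ∀ x a e, m₂ x a e = m2bar x e)
    (hδ : ∀ x e, δ x e = 1 - wHat x e / wE πt π₀ φ x e)
    (hσ : ∀ x e, σ2bar x e = m2bar x e - qbar x e ^ 2) :
    E₀ p π₀ φ (fun x _ e => wHat x e ^ 2 * m2bar x e) -
        (E₀ p π₀ φ (fun x _ e => wHat x e * qbar x e)) ^ 2 =
      (∑ x, p x * ∑ e, pE πt φ x e * (1 - δ x e) ^ 2 * wE πt π₀ φ x e * σ2bar x e) +
        (∑ x, p x * ((∑ e, pE π₀ φ x e * wHat x e ^ 2 * qbar x e ^ 2) -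
          (∑ e, pE π₀ φ x e * wHat x e * qbar x e) ^ 2)) +
        ((∑ x, p x * (∑ e, pE πt φ x e * (1 - δ x e) * qbar x e) ^ 2) -
          (∑ x, p x * ∑ e, pE πt φ x e * (1 - δ x e) * qbar x e) ^ 2) :=
  mips_variance_estimated_weights_general p πt π₀ φ qbar m2bar wHat δ σ2bar hsuppt hδ hσ
end
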